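/- If ρ is an extremal realisation of a family of configurations F and f : ρ → ρ' is a map of realisations, then ρ' is extremal and f factors as a projection ρ → ρ₀ followed by an isomorphism ρ₀ ≅ ρ'; moreover the carrier R₀ of ρ₀ is a down-closed subset of the carrier R of ρ, with order the restriction of the order on R. -/

import Mathlib

universe u v w

/-- The image of a set under a partial function. -/
def pimage {α : Type u} {β : Type v} (f : α → Option β) (x : Set α) : Set β :=
  {b | ∃ a ∈ x, f a = some b}

/-- A family of configurations over the set of events `A`:
a non-empty family of subsets, whose underlying set is all of `A`,
closed under unions of finitely compatible subfamilies,
and satisfying the securing-chain condition. -/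
structure ConfigFamily (A : Type u) where
  F : Set (Set A)
  nonempty : F.Nonempty
  covers : ∀ a : A, ∃ x ∈ F, a ∈ x
  unionClosed : ∀ X ⊆ F, (∀ Y ⊆ X, Y.Finite → ∃ z ∈ F, ∀ y ∈ Y, y ⊆ z) → ⋃₀ X ∈ F
  secured : ∀ x ∈ F, ∀ e ∈ x, ∃ l : List A, l ≠ [] ∧ l.getLast? = some e ∧
    (∀ a ∈ l, a ∈ x) ∧ ∀ i, 0 < i → i ≤ l.length → {a | a ∈ l.take i} ∈ F

/-- A causal realisation of the family `C`: a partial order whose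
principal lower sets are finite, together with a function to events
sending every down-closed subset to a configuration of the family. -/
structure Realisation {A : Type u} (C : ConfigFamily A) where
  carrier : Type u
  le : carrier → carrier → Prop
  le_refl : ∀ a, le a a
  le_trans : ∀ a b c, le a b → le b c → le a c
  le_antisymm : ∀ a b, le a b → le b a → a = b
  finPast : ∀ e, {e' | le e' e}.Finite
  ρ : carrier → A
  real : ∀ x : Set carrier, (∀ a ∈ x, ∀ b, le b a → b ∈ x) → ρ '' x ∈ C.F

namespace Realisation

variable {A : Type u} {C : ConfigFamily A}

/-- Down-closed subsets of the carrier of a realisation. -/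
def IsDown (r : Realisation C) (x : Set r.carrier) : Prop :=
  ∀ a ∈ x, ∀ b, r.le b a → b ∈ x

/-- The set `[a) = [a] \ {a}` of strict predecessors. -/
def spred (r : Realisation C) (a : r.carrier) : Set r.carrier :=
  {b | r.le b a ∧ b ≠ a}

/-- The carrier has a top element. -/
def HasTop (r : Realisation C) : Prop := ∃ t, ∀ a, r.le a t

end Realisation

/-- A map of realisations: a partial surjective function between the carriers,
preserving down-closed subsets and commuting with the functions to events. -/
structure RealMap {A : Type u} {C : ConfigFamily A} (r r' : Realisation C) where
  f : r.carrier → Option r'.carrier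
  surj : ∀ b, ∃ a, f a = some b
  presDown : ∀ x, r.IsDown x → r'.IsDown (pimage f x)
  commutes : ∀ a b, f a = some b → r.ρ a = r'.ρ b

namespace RealMap

variable {A : Type u} {C : ConfigFamily A} {r r' r₀ : Realisation C}

/-- The map is total. -/
def IsTotal (m : RealMap r r') : Prop := ∀ a, ∃ b, m.f a = some b

/-- The map is an isomorphism of realisations: it has an inverse map of
realisations, given by the inverse relation. -/
def IsIso (m : RealMap r r') : Prop :=
  ∃ m' : RealMap r' r, ∀ a b, m.f a = some b ↔ m'.f b = some a

/-- `m : r → r₀` is a projection witnessed by `g`: `g` realises the carrier of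
`r₀` as a subset of the carrier of `r` with the restricted order and restricted
function to events, and `m` is the inverse relation of this inclusion. -/
def IsProjectionVia (m : RealMap r r₀) (g : r₀.carrier → r.carrier) : Prop :=
  Function.Injective g ∧ (∀ a b, r₀.le a b ↔ r.le (g a) (g b)) ∧
    (∀ a, r₀.ρ a = r.ρ (g a)) ∧ (∀ a b, m.f a = some b ↔ g b = a)

/-- `m` is a projection. -/
def IsProjection (m : RealMap r r₀) : Prop := ∃ g, m.IsProjectionVia g

end RealMap

/-- A realisation is extremal when every total map of realisations from it
is an isomorphism. -/
def Realisation.Extremal {A : Type u} {C : ConfigFamily A} (r : Realisation C) : Prop :=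
  ∀ (r' : Realisation C) (m : RealMap r r'), m.IsTotal → m.IsIso

/-- A prime extremal realisation: extremal with a top element. -/
def Realisation.PrimeExtremal {A : Type u} {C : ConfigFamily A} (r : Realisation C) : Prop :=
  r.Extremal ∧ r.HasTop

/-- Isomorphism of realisations. -/
def RealIso {A : Type u} {C : ConfigFamily A} (r r' : Realisation C) : Prop :=
  ∃ m : RealMap r r', m.IsIso

/-- `m` is the composite of `m₁` followed by `m₂` (as partial functions). -/
def CompEq {A : Type u} {C : ConfigFamily A} {r r' r'' : Realisation C}
    (m₁ : RealMap r r') (m₂ : RealMap r' r'') (m : RealMap r r'') : Prop :=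
  ∀ a c, m.f a = some c ↔ ∃ b, m₁.f a = some b ∧ m₂.f b = some c


/-!
Given a map `f : r → r'`, glue to `r'` the events of `r` at which `f` is undefined, placing `b`
below such an `a` when `b` is the image of an event below `a`. This realisation receives a total
map from `r` which, when `r` is extremal, is an isomorphism; pulling back principal down-sets
along its inverse shows that the domain of `f` is down-closed and that `f` is injective and
monotone there. So `f` restricted to its domain is an isomorphism, which is the factorisation;
and for a total `n : r' → r''` these properties of `f.comp n` descend to `n`, making it an
isomorphism.
-/

theorem ConfigFamily.union_mem_of_subset {A : Type u} (C : ConfigFamily A) {x y z : Set A}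
    (hx : x ∈ C.F) (hy : y ∈ C.F) (hz : z ∈ C.F) (hxz : x ⊆ z) (hyz : y ⊆ z) :
    x ∪ y ∈ C.F := by
  rw [← Set.sUnion_pair]
  refine C.unionClosed _ (Set.pair_subset hx hy) fun Y hY _ => ⟨z, hz, fun s hs => ?_⟩
  rcases hY hs with rfl | rfl
  exacts [hxz, hyz]

namespace Realisation

variable {A : Type u} {C : ConfigFamily A} (r : Realisation C)

theorem isDown_univ : r.IsDown Set.univ := fun _ _ _ _ => trivial

theorem isDown_setOf_le (a : r.carrier) : r.IsDown {b | r.le b a} :=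
  fun _ hb c hc => r.le_trans c _ a hc hb

theorem range_ρ_mem : Set.range r.ρ ∈ C.F := by
  simpa only [Set.image_univ] using r.real Set.univ r.isDown_univ

variable {r}

theorem isDown_image_val {S : Set r.carrier} (hS : r.IsDown S) {x : Set S}
    (hx : ∀ a ∈ x, ∀ b : S, r.le b a → b ∈ x) : r.IsDown (Subtype.val '' x) := by
  rintro _ ⟨a, ha, rfl⟩ b hb
  exact ⟨⟨b, hS a a.2 b hb⟩, hx a ha _ hb, rfl⟩

variable (r)

abbrev restrict (S : Set r.carrier) (hS : r.IsDown S) : Realisation C where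
  carrier := S
  le a b := r.le a b
  le_refl a := r.le_refl a
  le_trans a b c := r.le_trans a b c
  le_antisymm a b h₁ h₂ := Subtype.ext (r.le_antisymm a b h₁ h₂)
  finPast e := (r.finPast e).preimage Subtype.val_injective.injOn
  ρ a := r.ρ a
  real x hx := by
    simpa only [Set.image_image] using r.real _ (isDown_image_val hS hx)

noncomputable def proj (S : Set r.carrier) (hS : r.IsDown S) : RealMap r (r.restrict S hS) where
  f := Function.partialInv (Subtype.val : S → r.carrier)
  surj b := ⟨b.1, (Subtype.val_injective.isPartialInv _ _).2 rfl⟩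
  presDown x hx := by
    rintro u ⟨a, ha, hau⟩ b hb
    obtain rfl : u.1 = a := (Subtype.val_injective.isPartialInv _ _).1 hau
    exact ⟨b.1, hx _ ha _ hb, (Subtype.val_injective.isPartialInv _ _).2 rfl⟩
  commutes a b h := by
    obtain rfl : b.1 = a := (Subtype.val_injective.isPartialInv _ _).1 h
    rfl

theorem proj_isProjectionVia (S : Set r.carrier) (hS : r.IsDown S) :
    (r.proj S hS).IsProjectionVia Subtype.val :=
  ⟨Subtype.val_injective, fun _ _ => Iff.rfl, fun _ => rfl, fun _ _ => Subtype.val_injective.isPartialInv _ _⟩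

end Realisation

namespace RealMap

variable {A : Type u} {C : ConfigFamily A} {r r' r'' : Realisation C}

def domain (m : RealMap r r') : Set r.carrier := {a | ∃ b, m.f a = some b}

def IsInjective (m : RealMap r r') : Prop :=
  ∀ a b c, m.f a = some c → m.f b = some c → a = b

def IsMonotone (m : RealMap r r') : Prop :=
  ∀ a b a' b', r.le a b → m.f a = some a' → m.f b = some b' → r'.le a' b'

theorem range_ρ_subset (m : RealMap r r') : Set.range r'.ρ ⊆ Set.range r.ρ := by
  rintro _ ⟨b, rfl⟩
  obtain ⟨a, ha⟩ := m.surj b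
  exact ⟨a, m.commutes a b ha⟩

theorem exists_le_of_le (m : RealMap r r') {a : r.carrier} {b b' : r'.carrier}
    (hb : m.f a = some b) (hb' : r'.le b' b) : ∃ a', r.le a' a ∧ m.f a' = some b' :=
  m.presDown _ (r.isDown_setOf_le a) b ⟨a, r.le_refl a, hb⟩ b' hb'

def comp (m₁ : RealMap r r') (m₂ : RealMap r' r'') : RealMap r r'' where
  f a := (m₁.f a).bind m₂.f
  surj c := by
    obtain ⟨b, hb⟩ := m₂.surj c
    obtain ⟨a, ha⟩ := m₁.surj b
    exact ⟨a, by rw [ha, Option.bind_some, hb]⟩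
  presDown x hx := by
    have himage : pimage (fun a => (m₁.f a).bind m₂.f) x = pimage m₂.f (pimage m₁.f x) := by
      ext c
      simp only [pimage, Set.mem_ofPred_eq, Option.bind_eq_some_iff]
      grind
    rw [himage]
    exact m₂.presDown _ (m₁.presDown x hx)
  commutes a c h := by
    obtain ⟨b, hb, hc⟩ := Option.bind_eq_some_iff.1 h
    rw [m₁.commutes a b hb, m₂.commutes b c hc]

theorem comp_f_eq_some (m₁ : RealMap r r') (m₂ : RealMap r' r'') {a : r.carrier}
    {c : r''.carrier} : (m₁.comp m₂).f a = some c ↔ ∃ b, m₁.f a = some b ∧ m₂.f b = some c :=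
  Option.bind_eq_some_iff

theorem IsInjective.of_comp {m₁ : RealMap r r'} {m₂ : RealMap r' r''}
    (h : (m₁.comp m₂).IsInjective) : m₂.IsInjective := by
  intro b₁ b₂ c h₁ h₂
  obtain ⟨a₁, ha₁⟩ := m₁.surj b₁
  obtain ⟨a₂, ha₂⟩ := m₁.surj b₂
  have : a₁ = a₂ :=
    h a₁ a₂ c (comp_f_eq_some _ _ |>.2 ⟨b₁, ha₁, h₁⟩) (comp_f_eq_some _ _ |>.2 ⟨b₂, ha₂, h₂⟩)
  subst this
  exact Option.some_injective _ (ha₁.symm.trans ha₂)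

theorem IsMonotone.of_comp {m₁ : RealMap r r'} {m₂ : RealMap r' r''}
    (h : (m₁.comp m₂).IsMonotone) : m₂.IsMonotone := by
  intro b₁ b₂ c₁ c₂ hb h₁ h₂
  obtain ⟨a₂, ha₂⟩ := m₁.surj b₂
  obtain ⟨a₁, ha, ha₁⟩ := m₁.exists_le_of_le ha₂ hb
  exact h a₁ a₂ c₁ c₂ ha (comp_f_eq_some _ _ |>.2 ⟨b₁, ha₁, h₁⟩)
    (comp_f_eq_some _ _ |>.2 ⟨b₂, ha₂, h₂⟩)

theorem IsTotal.isIso {m : RealMap r r'} (ht : m.IsTotal) (hi : m.IsInjective)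
    (hm : m.IsMonotone) : m.IsIso := by
  have hinv : ∀ {a b}, m.f a = some b ↔ (m.surj b).choose = a := fun {a b} =>
    ⟨fun h => hi _ _ b (m.surj b).choose_spec h, fun h => h ▸ (m.surj b).choose_spec⟩
  refine ⟨⟨fun b => some (m.surj b).choose, fun a => ?_, fun x hx => ?_, fun b a h => ?_⟩,
    fun a b => hinv.trans Option.some_inj.symm⟩
  · obtain ⟨b, hb⟩ := ht a
    exact ⟨b, congrArg some (hinv.1 hb)⟩
  · rintro a ⟨b, hb, hab⟩ a' ha'
    obtain ⟨b', hb'⟩ := ht a'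
    have hab : m.f a = some b := hinv.2 (Option.some_inj.1 hab)
    exact ⟨b', hx b hb b' (hm a' a b' b ha' hb' hab), congrArg some (hinv.1 hb')⟩
  · exact (m.commutes _ b (hinv.2 (Option.some_inj.1 h))).symm

def restrictDomain (m : RealMap r r') (h : r.IsDown m.domain) :
    RealMap (r.restrict m.domain h) r' where
  f a := m.f a
  surj b := by
    obtain ⟨a, ha⟩ := m.surj b
    exact ⟨⟨a, b, ha⟩, ha⟩
  presDown x hx := by
    have himage : pimage (fun a : m.domain => m.f a) x = pimage m.f (Subtype.val '' x) := by
      ext b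
      simp only [pimage, Set.mem_ofPred_eq, Set.mem_image]
      grind
    rw [himage]
    exact m.presDown _ (Realisation.isDown_image_val h hx)
  commutes a b hab := m.commutes a b hab

theorem restrictDomain_isIso (m : RealMap r r') (h : r.IsDown m.domain) (hi : m.IsInjective)
    (hm : m.IsMonotone) : (m.restrictDomain h).IsIso :=
  IsTotal.isIso (fun a => a.2) (fun a b c ha hb => Subtype.ext (hi a b c ha hb))
    (fun a b => hm a b)

variable (f : RealMap r r')

def TotalizationLe : r'.carrier ⊕ {a // f.f a = none} → r'.carrier ⊕ {a // f.f a = none} → Prop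
  | .inl b, .inl b' => r'.le b b'
  | .inl b, .inr a => ∃ c, r.le c a ∧ f.f c = some b
  | .inr _, .inl _ => False
  | .inr a, .inr a' => r.le a a'

abbrev totalization : Realisation C where
  carrier := r'.carrier ⊕ {a // f.f a = none}
  le := f.TotalizationLe
  le_refl
    | .inl b => r'.le_refl b
    | .inr a => r.le_refl a
  le_trans := by
    rintro (b₁ | a₁) (b₂ | a₂) (b₃ | a₃) h₁ h₂ <;> simp only [TotalizationLe] at h₁ h₂ ⊢
    · exact r'.le_trans _ _ _ h₁ h₂
    · obtain ⟨c, hc, hfc⟩ := h₂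
      obtain ⟨d, hd, hfd⟩ := f.exists_le_of_le hfc h₁
      exact ⟨d, r.le_trans _ _ _ hd hc, hfd⟩
    · obtain ⟨c, hc, hfc⟩ := h₁
      exact ⟨c, r.le_trans _ _ _ hc h₂, hfc⟩
    · exact r.le_trans _ _ _ h₁ h₂
  le_antisymm := by
    rintro (b | a) (b' | a') h₁ h₂ <;> simp only [TotalizationLe] at h₁ h₂
    · rw [r'.le_antisymm _ _ h₁ h₂]
    · rw [Subtype.ext (r.le_antisymm _ _ h₁ h₂)]
  finPast := by
    rintro (b | a)
    · refine ((r'.finPast b).image Sum.inl).subset ?_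
      rintro (b' | a') h
      · exact ⟨b', h, rfl⟩
      · exact h.elim
    · have hpast := r.finPast a
      refine ((((hpast.image f.f).preimage (Option.some_injective _).injOn).image Sum.inl).union
        ((hpast.preimage Subtype.val_injective.injOn).image Sum.inr)).subset ?_
      rintro (b' | a') h
      · obtain ⟨c, hc, hfc⟩ := h
        exact Or.inl ⟨b', ⟨c, hc, hfc⟩, rfl⟩
      · exact Or.inr ⟨a', h, rfl⟩
  ρ := Sum.elim r'.ρ fun a : {a // f.f a = none} => r.ρ a
  real x hx := by
    set w := {b | Sum.inl b ∈ x}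
    set y := {c | ∃ a, Sum.inr a ∈ x ∧ r.le c a}
    have hw : r'.IsDown w := fun b hb b' hb' => hx _ hb (.inl b') hb'
    have hy : r.IsDown y := fun c ⟨a, ha, hca⟩ d hdc => ⟨a, ha, r.le_trans _ _ _ hdc hca⟩
    have himage : Sum.elim r'.ρ (fun a : {a // f.f a = none} => r.ρ a) '' x = r'.ρ '' w ∪ r.ρ '' y := by
      refine (Set.image_subset_iff.2 ?_).antisymm (Set.union_subset ?_ ?_)
      · rintro (b | a) hu
        exacts [Or.inl ⟨b, hu, rfl⟩, Or.inr ⟨a.1, ⟨a, hu, r.le_refl a⟩, rfl⟩]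
      · rintro _ ⟨b, hb, rfl⟩
        exact ⟨.inl b, hb, rfl⟩
      · rintro _ ⟨c, ⟨a, ha, hca⟩, rfl⟩
        rcases hfc : f.f c with _ | b
        · exact ⟨.inr ⟨c, hfc⟩, hx _ ha (.inr ⟨c, hfc⟩) hca, rfl⟩
        · exact ⟨.inl b, hx _ ha (.inl b) ⟨c, hca, hfc⟩, (f.commutes c b hfc).symm⟩
    rw [himage]
    exact C.union_mem_of_subset (r'.real w hw) (r.real y hy) r.range_ρ_mem
      ((Set.image_subset_range _ _).trans f.range_ρ_subset) (Set.image_subset_range _ _)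

def toTotalizationFun (a : r.carrier) : f.totalization.carrier :=
  match h : f.f a with
  | some b => .inl b
  | none => .inr ⟨a, h⟩

theorem toTotalizationFun_of_eq_some {a : r.carrier} {b : r'.carrier} (h : f.f a = some b) :
    f.toTotalizationFun a = .inl b := by
  unfold toTotalizationFun
  split <;> simp_all

theorem toTotalizationFun_of_eq_none {a : r.carrier} (h : f.f a = none) :
    f.toTotalizationFun a = .inr ⟨a, h⟩ := by
  unfold toTotalizationFun
  split <;> simp_all

def toTotalization : RealMap r f.totalization where
  f a := some (f.toTotalizationFun a)
  surj
    | .inl b => (f.surj b).imp fun _ ha => congrArg some (f.toTotalizationFun_of_eq_some ha)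
    | .inr a => ⟨a, congrArg some (f.toTotalizationFun_of_eq_none a.2)⟩
  presDown x hx := by
    have himage : pimage (fun a => some (f.toTotalizationFun a)) x = f.toTotalizationFun '' x := by
      ext u
      simp [pimage]
    rw [himage]
    rintro _ ⟨a, ha, rfl⟩ v hv
    rcases hfa : f.f a with _ | b
    · rw [f.toTotalizationFun_of_eq_none hfa] at hv
      rcases v with b' | a'
      · obtain ⟨c, hca, hfc⟩ := hv
        exact ⟨c, hx a ha c hca, f.toTotalizationFun_of_eq_some hfc⟩
      · exact ⟨a', hx a ha a' hv, f.toTotalizationFun_of_eq_none a'.2⟩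
    · rw [f.toTotalizationFun_of_eq_some hfa] at hv
      rcases v with b' | a'
      · obtain ⟨c, hca, hfc⟩ := f.exists_le_of_le hfa hv
        exact ⟨c, hx a ha c hca, f.toTotalizationFun_of_eq_some hfc⟩
      · exact hv.elim
  commutes a u h := by
    obtain rfl := Option.some_inj.1 h
    rcases hfa : f.f a with _ | b
    · rw [f.toTotalizationFun_of_eq_none hfa]
      rfl
    · rw [f.toTotalizationFun_of_eq_some hfa]
      exact f.commutes a b hfa

end RealMap

namespace Realisation.Extremal

variable {A : Type u} {C : ConfigFamily A} {r r' : Realisation C}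

theorem exists_map_le (hr : r.Extremal) (f : RealMap r r') {a b : r.carrier} {b' : r'.carrier}
    (hab : r.le a b) (hb : f.f b = some b') : ∃ a', f.f a = some a' ∧ r'.le a' b' := by
  obtain ⟨inv, hinv⟩ := hr _ f.toTotalization fun a => ⟨_, rfl⟩
  -- the down-set of `.inl b'` contains only elements of `r'`; `inv` pulls it back to a down-set
  have hdown := inv.presDown _ (f.totalization.isDown_setOf_le (.inl b'))
  have hb_mem : b ∈ pimage inv.f {u | f.totalization.le u (.inl b')} :=
    ⟨.inl b', r'.le_refl b', (hinv b _).1 (congrArg some (f.toTotalizationFun_of_eq_some hb))⟩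
  obtain ⟨u, hu, hua⟩ := hdown b hb_mem a hab
  have hau : f.toTotalizationFun a = u := Option.some_inj.1 ((hinv a u).2 hua)
  rcases hfa : f.f a with _ | a'
  · rw [f.toTotalizationFun_of_eq_none hfa] at hau
    subst hau
    exact hu.elim
  · rw [f.toTotalizationFun_of_eq_some hfa] at hau
    subst hau
    exact ⟨a', rfl, hu⟩

theorem isDown_domain (hr : r.Extremal) (f : RealMap r r') : r.IsDown f.domain :=
  fun _ ⟨_, hb⟩ _ hab => (hr.exists_map_le f hab hb).imp fun _ h => h.1

theorem isMonotone (hr : r.Extremal) (f : RealMap r r') : f.IsMonotone := by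
  intro a b a' b' hab ha hb
  obtain ⟨a'', ha'', hle⟩ := hr.exists_map_le f hab hb
  rwa [Option.some_inj.1 (ha.symm.trans ha'')]

theorem isInjective (hr : r.Extremal) (f : RealMap r r') : f.IsInjective := by
  obtain ⟨inv, hinv⟩ := hr _ f.toTotalization fun a => ⟨_, rfl⟩
  intro a b c ha hb
  have ha' := (hinv a (.inl c)).1 (congrArg some (f.toTotalizationFun_of_eq_some ha))
  have hb' := (hinv b (.inl c)).1 (congrArg some (f.toTotalizationFun_of_eq_some hb))
  exact Option.some_injective _ (ha'.symm.trans hb')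

theorem of_map (hr : r.Extremal) (f : RealMap r r') : r'.Extremal := fun _ n hn =>
  hn.isIso (hr.isInjective (f.comp n)).of_comp (hr.isMonotone (f.comp n)).of_comp

theorem exists_factorization (hr : r.Extremal) (f : RealMap r r') :
    ∃ (r₀ : Realisation C) (p : RealMap r r₀) (i : RealMap r₀ r')
      (g : r₀.carrier → r.carrier),
      p.IsProjectionVia g ∧ r.IsDown (Set.range g) ∧ i.IsIso ∧ CompEq p i f := by
  have hdom := hr.isDown_domain f
  have hproj := r.proj_isProjectionVia _ hdom
  refine ⟨_, r.proj _ hdom, f.restrictDomain hdom, Subtype.val, hproj,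
    by rwa [Subtype.range_val], f.restrictDomain_isIso hdom (hr.isInjective f) (hr.isMonotone f),
    fun a c => ⟨fun h => ⟨⟨a, c, h⟩, (hproj.2.2.2 _ _).2 rfl, h⟩, ?_⟩⟩
  rintro ⟨b, hb, hbc⟩
  obtain rfl := (hproj.2.2.2 _ _).1 hb
  exact hbc

end Realisation.Extremal

/-- Any map of realisations from an extremal realisation has extremal target
and factors as a projection onto a down-closed subcarrier followed by an
isomorphism. -/
theorem stmt4 {A : Type u} (C : ConfigFamily A) (r r' : Realisation C)
    (hr : r.Extremal) (f : RealMap r r') :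
    r'.Extremal ∧ ∃ (r₀ : Realisation C) (p : RealMap r r₀) (i : RealMap r₀ r')
      (g : r₀.carrier → r.carrier),
      p.IsProjectionVia g ∧ r.IsDown (Set.range g) ∧ i.IsIso ∧ CompEq p i f :=
  ⟨hr.of_map f, hr.exists_factorization f⟩
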